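/- arXiv:math/0404019 — 2 statements merged into one kernel-verified Lean document; each statement's English description precedes it below -/
import Mathlib

section
/- Let Ω be an n-dimensional F_q-vector space, x a subspace of codimension t, and 0 ≤ k ≤ n, 0 ≤ r ≤ n. Then the number of r-dimensional subspaces x_r with dim(x_r/(x_r ∩ x)) = k equals q^{k(n-t-r+k)} [t choose k]_q [n-t choose r-k]_q. -/
/-!
Call a pair `(a, b)` an `(s, k)`-frame relative to `x` if `a` is a list of `s` independent vectors
of `x` and `b` a list of `k` vectors whose images in `Ω ⧸ x` are independent. Writing `r = s + k`,
the span of a frame is an `r`-dimensional subspace `W` with `dim (W ⊓ x) = s`, and the frames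
spanning a given such `W` are exactly the frames of `W` relative to `W ⊓ x`. Splitting `Ω` as
`x × (Ω ⧸ x)`, both frame counts are products of the classical counts `∏ i < m, (q ^ d - q ^ i)` of
independent tuples, so the number of subspaces is their quotient, which rearranges into
`q ^ (k (d - s)) [t choose k]_q [d choose s]_q` with `d = n - t`.
-/

noncomputable def qPoch (q : ℚ) (k : ℕ) : ℚ := ∏ j ∈ Finset.range k, (1 - q ^ (j + 1))

/-- Gaussian binomial coefficient `[m choose k]_q`, interpreted as `0` when
`k < 0` or `k > m`. -/
noncomputable def qBinomZ (q : ℚ) (m : ℕ) (k : ℤ) : ℚ :=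
  if 0 ≤ k ∧ k ≤ m then qPoch q m / (qPoch q k.toNat * qPoch q (m - k.toNat)) else 0

section QAnalog

open Finset

theorem prod_pow_sub_pow_mul_qPoch (Q : ℚ) (s e : ℕ) :
    (∏ i ∈ range s, (Q ^ (s + e) - Q ^ i)) * qPoch Q e =
      (∏ i ∈ range s, -Q ^ i) * qPoch Q (s + e) := by
  induction s generalizing e with
  | zero => simp
  | succ s ih =>
    have hstep : qPoch Q (e + 1) = qPoch Q e * (1 - Q ^ (e + 1)) := prod_range_succ _ _
    rw [prod_range_succ, prod_range_succ, show s + 1 + e = s + (e + 1) by omega]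
    linear_combination (-Q ^ s) * ih (e + 1) +
      Q ^ s * (∏ i ∈ range s, (Q ^ (s + (e + 1)) - Q ^ i)) * hstep

theorem qPoch_ne_zero {Q : ℚ} (hQ : 1 < Q) (m : ℕ) : qPoch Q m ≠ 0 :=
  prod_ne_zero_iff.2 fun j _ => sub_ne_zero.2 (one_lt_pow₀ hQ j.succ_ne_zero).ne

theorem qBinomZ_natCast_eq_div {Q : ℚ} (hQ : 1 < Q) (d s : ℕ) :
    qBinomZ Q d s = (∏ i ∈ range s, (Q ^ d - Q ^ i)) / ∏ i ∈ range s, (Q ^ s - Q ^ i) := by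
  rcases le_or_gt s d with hsd | hds
  · obtain ⟨e, rfl⟩ := Nat.exists_eq_add_of_le hsd
    have hs : ∏ i ∈ range s, (Q ^ s - Q ^ i) = (∏ i ∈ range s, -Q ^ i) * qPoch Q s := by
      simpa [qPoch] using prod_pow_sub_pow_mul_qPoch Q s 0
    have hse := prod_pow_sub_pow_mul_qPoch Q s e
    have hsign : ∏ i ∈ range s, -Q ^ i ≠ 0 :=
      prod_ne_zero_iff.2 fun i _ => neg_ne_zero.2 (pow_ne_zero i (by linarith))
    rw [qBinomZ, if_pos ⟨Int.natCast_nonneg s, by exact_mod_cast hsd⟩, Int.toNat_natCast,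
      Nat.add_sub_cancel_left]
    rw [hs, div_eq_div_iff (mul_ne_zero (qPoch_ne_zero hQ s) (qPoch_ne_zero hQ e))
      (mul_ne_zero hsign (qPoch_ne_zero hQ s))]
    linear_combination (-qPoch Q s) * hse
  · rw [qBinomZ, if_neg (by omega), prod_eq_zero (mem_range.2 hds) (sub_self _), zero_div]

theorem natCast_prod_pow_sub_pow {q : ℕ} (hq : 1 ≤ q) (d s : ℕ) :
    ((∏ i : Fin s, (q ^ d - q ^ (i : ℕ)) : ℕ) : ℚ) = ∏ i ∈ range s, ((q : ℚ) ^ d - q ^ i) := by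
  rw [Fin.prod_univ_eq_prod_range (fun i => q ^ d - q ^ i), Nat.cast_prod]
  rcases le_or_gt s d with hsd | hds
  · refine prod_congr rfl fun i hi => ?_
    rw [Nat.cast_sub (Nat.pow_le_pow_right hq (by grind)), Nat.cast_pow, Nat.cast_pow]
  · rw [prod_eq_zero (mem_range.2 hds) (by simp), prod_eq_zero (mem_range.2 hds) (by simp)]

/-- The number of `(s, k)`-frames relative to a `d`-dimensional subspace of codimension `e` over
`𝔽_q`, see `Frame.card`. -/
def frameCount (q d e s k : ℕ) : ℕ :=
  (∏ i : Fin s, (q ^ d - q ^ (i : ℕ))) * ((∏ i : Fin k, (q ^ e - q ^ (i : ℕ))) * q ^ (d * k))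

theorem frameCount_pos {q : ℕ} (hq : 2 ≤ q) {d e s k : ℕ} (hsd : s ≤ d) (hke : k ≤ e) :
    0 < frameCount q d e s k := by
  have hfactor : ∀ {m n : ℕ}, n ≤ m → ∀ i : Fin n, 0 < q ^ m - q ^ (i : ℕ) := fun hnm i =>
    Nat.sub_pos_of_lt (Nat.pow_lt_pow_right hq (by omega))
  exact Nat.mul_pos (prod_pos fun i _ => hfactor hsd i) <|
    Nat.mul_pos (prod_pos fun i _ => hfactor hke i) (by positivity)

theorem frameCount_div {q : ℕ} (hq : 2 ≤ q) (d e s k : ℕ) :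
    (frameCount q d e s k : ℚ) / frameCount q s k s k =
      (q : ℚ) ^ ((k : ℤ) * ((d : ℤ) - s)) * qBinomZ q e k * qBinomZ q d s := by
  have hQ : (1 : ℚ) < q := by exact_mod_cast hq
  have hprod : ∀ m, ∏ i ∈ range m, ((q : ℚ) ^ m - q ^ i) ≠ 0 := fun m =>
    prod_ne_zero_iff.2 fun i hi =>
      (sub_pos.2 (pow_lt_pow_right₀ hQ (mem_range.1 hi))).ne'
  have hpow : (q : ℚ) ^ ((k : ℤ) * ((d : ℤ) - s)) * q ^ (s * k) = q ^ (d * k) := by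
    rw [← zpow_natCast, ← zpow_natCast, ← zpow_add₀ (by positivity)]
    push_cast
    ring_nf
  simp only [frameCount, Nat.cast_mul, Nat.cast_pow, natCast_prod_pow_sub_pow (by omega : 1 ≤ q)]
  rw [qBinomZ_natCast_eq_div hQ, qBinomZ_natCast_eq_div hQ, ← hpow]
  field_simp [hprod s, hprod k]

end QAnalog

open Module Submodule

theorem Nat.card_eq_card_mul_of_card_fiber {α β : Type*} [Finite α] [Finite β] (f : α → β)
    {m : ℕ} (hf : ∀ b, Nat.card {a // f a = b} = m) : Nat.card α = Nat.card β * m := by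
  have := Fintype.ofFinite β
  rw [Nat.card_congr (Equiv.sigmaFiberEquiv f).symm, Nat.card_sigma, Finset.sum_congr rfl
    fun b _ => hf b, Finset.sum_const, Finset.card_univ, smul_eq_mul, Nat.card_eq_fintype_card]

theorem Nat.card_subtype_comp_of_equiv_prod {ι V X Y : Type*} [Finite ι] {g : V → X}
    (e : V ≃ X × Y) (he : ∀ v, (e v).1 = g v) (P : (ι → X) → Prop) :
    Nat.card {b : ι → V // P (g ∘ b)} =
      Nat.card {c : ι → X // P c} * Nat.card Y ^ Nat.card ι := by
  rw [← Nat.card_fun, ← Nat.card_prod]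
  refine Nat.card_congr <| (((Equiv.refl ι).arrowCongr e).subtypeEquiv fun b => ?_).trans <|
    (Equiv.subtypeEquivOfSubtype (Equiv.arrowProdEquivProdArrow ι _ _)).trans
      Equiv.prodSubtypeFstEquivSubtypeProd
  simp [Function.comp_def, he]

section LinearAlgebra

variable {K V : Type*} [Field K] [AddCommGroup V] [Module K V]

section FiniteField

variable [Fintype K] [Finite V]

theorem card_linearIndependent_eq_prod (k : ℕ) :
    Nat.card {b : Fin k → V // LinearIndependent K b} =
      ∏ i : Fin k, (Fintype.card K ^ finrank K V - Fintype.card K ^ (i : ℕ)) := by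
  rcases le_or_gt k (finrank K V) with hk | hk
  · exact card_linearIndependent hk
  · have : IsEmpty {b : Fin k → V // LinearIndependent K b} :=
      ⟨fun b => by simpa using (b.2.fintype_card_le_finrank.trans_lt hk).ne⟩
    rw [Nat.card_of_isEmpty]
    exact (Finset.prod_eq_zero (Finset.mem_univ (⟨finrank K V, hk⟩ : Fin k)) (Nat.sub_self _)).symm

theorem card_linearIndependent_mkQ_comp (p : Submodule K V) (k : ℕ) :
    Nat.card {b : Fin k → V // LinearIndependent K (p.mkQ ∘ b)} =
      (∏ i : Fin k, (Fintype.card K ^ finrank K (V ⧸ p) - Fintype.card K ^ (i : ℕ))) *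
        Fintype.card K ^ (finrank K p * k) := by
  obtain ⟨C, hC⟩ := p.exists_isCompl
  let e := p.mkQ.equivProdOfSurjectiveOfIsCompl (p.projectionOnto C hC) (range_mkQ p)
    (range_projectionOnto hC) (by rwa [ker_mkQ, ker_projectionOnto])
  have : Finite (V ⧸ p) := Module.finite_of_finite K
  rw [Nat.card_subtype_comp_of_equiv_prod (g := p.mkQ) e.toEquiv (fun _ => rfl)
      fun c => LinearIndependent K c,
    card_linearIndependent_eq_prod, Module.natCard_eq_pow_finrank (K := K),
    Nat.card_eq_fintype_card, Nat.card_fin, pow_mul]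

end FiniteField

theorem linearIndependent_comp_iff_mkQ_ker {Z ι : Type*} [AddCommGroup Z] [Module K Z]
    (f : V →ₗ[K] Z) (b : ι → V) :
    LinearIndependent K (f ∘ b) ↔ LinearIndependent K ((LinearMap.ker f).mkQ ∘ b) := by
  have hf : f ∘ b = (LinearMap.ker f).liftQ f le_rfl ∘ ((LinearMap.ker f).mkQ ∘ b) := by
    funext i; simp
  rw [hf, LinearMap.linearIndependent_iff _ ((LinearMap.ker f).ker_liftQ_eq_bot f _ le_rfl)]

theorem linearIndependent_mkQ_comap_subtype_iff {ι : Type*} (x W : Submodule K V) (b : ι → W) :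
    LinearIndependent K ((x.comap W.subtype).mkQ ∘ b) ↔
      LinearIndependent K (x.mkQ ∘ fun i => (b i : V)) := by
  have hker : x.comap W.subtype = LinearMap.ker (x.mkQ ∘ₗ W.subtype) := by
    rw [LinearMap.ker_comp, ker_mkQ]
  rw [hker, ← linearIndependent_comp_iff_mkQ_ker]
  rfl

structure Frame (x : Submodule K V) (s k : ℕ) where
  inner : Fin s → x
  outer : Fin k → V
  linearIndependent_inner : LinearIndependent K inner
  linearIndependent_outer : LinearIndependent K (x.mkQ ∘ outer)

namespace Frame

variable {x : Submodule K V} {s k : ℕ}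

def vectors (p : Frame x s k) : Fin s ⊕ Fin k → V :=
  Sum.elim (fun i => (p.inner i : V)) p.outer

def span (p : Frame x s k) : Submodule K V :=
  Submodule.span K (Set.range p.vectors)

theorem linearIndependent_vectors (p : Frame x s k) : LinearIndependent K p.vectors :=
  p.linearIndependent_inner.sumElim_of_quotient _ p.linearIndependent_outer

theorem finrank_span (p : Frame x s k) : finrank K p.span = s + k := by
  rw [span, finrank_span_eq_card p.linearIndependent_vectors, Fintype.card_sum, Fintype.card_fin,
    Fintype.card_fin]

theorem span_inf_eq (p : Frame x s k) :
    p.span ⊓ x = Submodule.span K (Set.range fun i => (p.inner i : V)) := by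
  have hx : Submodule.span K (Set.range fun i => (p.inner i : V)) ≤ x :=
    span_le.2 (Set.range_subset_iff.2 fun i => (p.inner i).2)
  have hb := Submodule.range_ker_disjoint p.linearIndependent_outer
  rw [ker_mkQ] at hb
  rw [span, vectors, Set.Sum.elim_range, span_union, sup_inf_assoc_of_le _ hx, hb.eq_bot,
    sup_bot_eq]

theorem finrank_span_inf (p : Frame x s k) : finrank K ↥(p.span ⊓ x) = s := by
  have hinner : LinearIndependent K fun i => (p.inner i : V) :=
    p.linearIndependent_inner.map' x.subtype x.ker_subtype
  rw [span_inf_eq, finrank_span_eq_card hinner, Fintype.card_fin]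

def equivProd (x : Submodule K V) (s k : ℕ) :
    Frame x s k ≃
      {a : Fin s → x // LinearIndependent K a} ×
        {b : Fin k → V // LinearIndependent K (x.mkQ ∘ b)} where
  toFun p := (⟨p.inner, p.linearIndependent_inner⟩, ⟨p.outer, p.linearIndependent_outer⟩)
  invFun ab := ⟨ab.1, ab.2, ab.1.2, ab.2.2⟩

instance [Finite V] : Finite (Frame x s k) :=
  .of_equiv _ (equivProd x s k).symm

theorem card [Fintype K] [Finite V] (x : Submodule K V) (s k : ℕ) :
    Nat.card (Frame x s k) =
      frameCount (Fintype.card K) (finrank K x) (finrank K (V ⧸ x)) s k := by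
  rw [Nat.card_congr (equivProd x s k), Nat.card_prod, card_linearIndependent_eq_prod,
    card_linearIndependent_mkQ_comp]
  rfl

variable {W : Submodule K V}

def restrict (p : Frame x s k) (hW : p.span ≤ W) : Frame (x.comap W.subtype) s k where
  inner i := ⟨⟨p.inner i, hW (subset_span ⟨Sum.inl i, rfl⟩)⟩, (p.inner i).2⟩
  outer j := ⟨p.outer j, hW (subset_span ⟨Sum.inr j, rfl⟩)⟩
  linearIndependent_inner := .of_comp (x.comap W.subtype).subtype <| .of_comp W.subtype <|
    p.linearIndependent_inner.map' x.subtype x.ker_subtype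
  linearIndependent_outer :=
    (linearIndependent_mkQ_comap_subtype_iff x W _).2 p.linearIndependent_outer

def ofSubspace (p : Frame (x.comap W.subtype) s k) : Frame x s k where
  inner i := ⟨p.inner i, (p.inner i).2⟩
  outer j := p.outer j
  linearIndependent_inner := .of_comp x.subtype <|
    (p.linearIndependent_inner.map' _ (x.comap W.subtype).ker_subtype).map' W.subtype W.ker_subtype
  linearIndependent_outer :=
    (linearIndependent_mkQ_comap_subtype_iff x W _).1 p.linearIndependent_outer

theorem span_ofSubspace [FiniteDimensional K V] (p : Frame (x.comap W.subtype) s k)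
    (hW : finrank K W = s + k) : p.ofSubspace.span = W := by
  refine eq_of_le_of_finrank_eq ?_ (by rw [finrank_span, hW])
  rw [span, span_le]
  rintro _ ⟨i | j, rfl⟩
  · exact (p.inner i : W).2
  · exact (p.outer j).2

def fiberEquiv [FiniteDimensional K V] (hW : finrank K W = s + k) :
    {p : Frame x s k // p.span = W} ≃ Frame (x.comap W.subtype) s k where
  toFun p := p.1.restrict p.2.le
  invFun p := ⟨p.ofSubspace, p.span_ofSubspace hW⟩

theorem card_fiber [Fintype K] [Finite V] (hW : finrank K W = s + k)
    (hWx : finrank K ↥(W ⊓ x) = s) :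
    Nat.card {p : Frame x s k // p.span = W} = frameCount (Fintype.card K) s k s k := by
  have hcomap : finrank K (x.comap W.subtype) = s := by
    rw [← finrank_map_subtype_eq, map_comap_subtype, hWx]
  have hquot : finrank K (W ⧸ x.comap W.subtype) = k := by
    have := (x.comap W.subtype).finrank_quotient_add_finrank
    omega
  rw [Nat.card_congr (fiberEquiv hW), card, hcomap, hquot]

end Frame

theorem card_subspaces_mul_frameCount [Fintype K] [Finite V] (x : Submodule K V) (s k : ℕ) :
    Nat.card {W : Submodule K V // finrank K W = s + k ∧ finrank K ↥(W ⊓ x) = s} *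
        frameCount (Fintype.card K) s k s k =
      frameCount (Fintype.card K) (finrank K x) (finrank K (V ⧸ x)) s k := by
  rw [← Frame.card, Nat.card_eq_card_mul_of_card_fiber
    (fun p : Frame x s k => (⟨p.span, p.finrank_span, p.finrank_span_inf⟩ :
      {W : Submodule K V // finrank K W = s + k ∧ finrank K ↥(W ⊓ x) = s}))]
  intro W
  rw [← Frame.card_fiber W.2.1 W.2.2]
  exact Nat.card_congr (Equiv.subtypeEquivRight fun p => Subtype.ext_iff)

theorem card_subspaces_eq [Fintype K] [Finite V] (x : Submodule K V) (s k : ℕ) :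
    (Nat.card {W : Submodule K V // finrank K W = s + k ∧ finrank K ↥(W ⊓ x) = s} : ℚ) =
      (Fintype.card K : ℚ) ^ ((k : ℤ) * ((finrank K x : ℤ) - s)) *
        qBinomZ (Fintype.card K) (finrank K (V ⧸ x)) k *
          qBinomZ (Fintype.card K) (finrank K x) s := by
  have hq : 2 ≤ Fintype.card K := Fintype.one_lt_card
  rw [← frameCount_div hq, eq_div_iff (by exact_mod_cast (frameCount_pos hq le_rfl le_rfl).ne'),
    ← Nat.cast_mul, card_subspaces_mul_frameCount]

end LinearAlgebra

theorem card_M_general (q n r t k : ℕ) (K : Type*) [Field K] [Fintype K]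
    (hq : Fintype.card K = q)
    (Ω : Type*) [AddCommGroup Ω] [Module K Ω] [FiniteDimensional K Ω]
    (hn : Module.finrank K Ω = n)
    (x : Submodule K Ω) (hx : Module.finrank K x + t = n) :
    (Nat.card {xr : Submodule K Ω // Module.finrank K xr = r ∧
        Module.finrank K (xr ⊓ x : Submodule K Ω) + k = r} : ℚ) =
      (q : ℚ) ^ ((k : ℤ) * ((n : ℤ) - t - r + k)) *
        qBinomZ (q : ℚ) t (k : ℤ) * qBinomZ (q : ℚ) (n - t) ((r : ℤ) - k) := by
  subst hq hn
  have : Finite Ω := Module.finite_of_finite K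
  rcases lt_or_ge r k with hrk | hkr
  · have : IsEmpty {xr : Submodule K Ω // finrank K xr = r ∧ finrank K ↥(xr ⊓ x) + k = r} :=
      ⟨fun W => by omega⟩
    have hbinom : qBinomZ (Fintype.card K) (finrank K Ω - t) (r - k) = 0 := if_neg (by omega)
    rw [Nat.card_of_isEmpty, Nat.cast_zero, hbinom, mul_zero]
  obtain ⟨s, rfl⟩ := Nat.exists_eq_add_of_le hkr
  have hquot : finrank K (Ω ⧸ x) = t := by
    have := x.finrank_quotient_add_finrank
    omega
  have hpred (W : Submodule K Ω) : (finrank K W = k + s ∧ finrank K ↥(W ⊓ x) + k = k + s) ↔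
      (finrank K W = s + k ∧ finrank K ↥(W ⊓ x) = s) := by omega
  simp only [hpred]
  rw [card_subspaces_eq, hquot, show finrank K Ω - t = finrank K x by omega, ← hx]
  push_cast
  ring_nf

/-- If `x` is a subspace of codimension `t` in an `n`-dimensional `F_q`-vector space,
the number of `r`-dimensional subspaces `x_r` with `∂(x_r, x) = dim(x_r/(x_r∩x)) = k`
equals `q^{k(n-t-r+k)} [t choose k]_q [n-t choose r-k]_q`. -/
theorem card_M (q n r t k : ℕ) (K : Type*) [Field K] [Fintype K]
    (hq : Fintype.card K = q)
    (Ω : Type*) [AddCommGroup Ω] [Module K Ω] [FiniteDimensional K Ω]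
    (hn : Module.finrank K Ω = n) (hk : k ≤ n) (hr : r ≤ n)
    (x : Submodule K Ω) (hx : Module.finrank K x + t = n) :
    (Nat.card {xr : Submodule K Ω // Module.finrank K xr = r ∧
        Module.finrank K (xr ⊓ x : Submodule K Ω) + k = r} : ℚ) =
      (q : ℚ) ^ ((k : ℤ) * ((n : ℤ) - t - r + k)) *
        qBinomZ (q : ℚ) t (k : ℤ) * qBinomZ (q : ℚ) (n - t) ((r : ℤ) - k) :=
  card_M_general q n r t k K hq Ω hn x hx
end

section
/- For 0 ≤ r₁ ≤ r₂ ≤ r₃ ≤ n, the composition of the inclusion Radon transforms satisfies R^{r₂,r₃}_⊂ ∘ R^{r₁,r₂}_⊂ = ([r₃ choose r₂]_q [r₂ choose r₁]_q / [r₃ choose r₁]_q) · R^{r₁,r₃}_⊂, equivalently R^{r₂,r₃}_⊂ ∘ R^{r₁,r₂}_⊂ = [r₃ - r₁ choose r₂ - r₁]_q · R^{r₁,r₃}_⊂. -/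
open scoped Classical

noncomputable def qBinom (q : ℚ) (n r : ℕ) : ℚ := qPoch q n / (qPoch q r * qPoch q (n - r))

/-- The inclusion Radon transform `R^{r,r'}_⊂` from functions on `r`-dimensional
subspaces to functions on `r'`-dimensional subspaces:
`(Rφ)(x') = ∑_{x ⊆ x', dim x = r} φ(x)`. -/
noncomputable def radon (K Ω : Type*) [Field K] [AddCommGroup Ω] [Module K Ω]
    (r r' : ℕ) (φ : {W : Submodule K Ω // Module.finrank K W = r} → ℂ)
    (x' : {W : Submodule K Ω // Module.finrank K W = r'}) : ℂ :=
  ∑ᶠ x : {W : Submodule K Ω // Module.finrank K W = r}, if x.1 ≤ x'.1 then φ x else 0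

open Module Submodule Finset

theorem prod_range_pow_add_sub_pow {R : Type*} [CommRing R] (q : R) (m d : ℕ) :
    ∏ i ∈ range d, (q ^ (m + d) - q ^ i) =
      (-1) ^ d * (∏ i ∈ range d, q ^ i) * ∏ i ∈ range d, (1 - q ^ (m + i + 1)) := by
  induction d generalizing m with
  | zero => simp
  | succ d ih =>
    rw [prod_range_succ, ← add_assoc, add_right_comm, ih, prod_range_succ, prod_range_succ']
    simp only [← add_assoc, add_zero, add_right_comm m 1]
    ring

theorem qPoch_ne_zero_s15 {q : ℚ} (hq : 1 < q) (k : ℕ) : qPoch q k ≠ 0 :=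
  prod_ne_zero_iff.2 fun j _ => sub_ne_zero.2 (one_lt_pow₀ hq j.succ_ne_zero).ne

theorem qBinom_add_mul_prod_pow_sub_pow {q : ℚ} (hq : 1 < q) (m d : ℕ) :
    qBinom q (m + d) d * ∏ i ∈ range d, (q ^ d - q ^ i) =
      ∏ i ∈ range d, (q ^ (m + d) - q ^ i) := by
  have hsplit : qPoch q (m + d) = qPoch q m * ∏ i ∈ range d, (1 - q ^ (m + i + 1)) :=
    prod_range_add _ m d
  have hd : ∏ i ∈ range d, (1 - q ^ (0 + i + 1)) = qPoch q d := by simp [qPoch]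
  have h0 := prod_range_pow_add_sub_pow q 0 d
  rw [zero_add, hd] at h0
  rw [qBinom, Nat.add_sub_cancel, hsplit, h0, prod_range_pow_add_sub_pow]
  field_simp [qPoch_ne_zero_s15 hq]

section Lattice

variable {R M : Type*} [Ring R] [AddCommGroup M] [Module R M]

theorem natCard_submodules_below (B : Submodule R M) (P : Submodule R M → Prop) :
    Nat.card {W : Submodule R M // W ≤ B ∧ P W} =
      Nat.card {W : Submodule R B // P (W.map B.subtype)} :=
  Nat.card_congr ((B.mapIic.toEquiv.subtypeEquiv fun _ => Iff.rfl).trans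
    (Equiv.subtypeSubtypeEquivSubtypeInter (· ∈ Set.Iic B) P)).symm

theorem natCard_submodules_above (p : Submodule R M) (P : Submodule R M → Prop) :
    Nat.card {W : Submodule R M // p ≤ W ∧ P W} =
      Nat.card {U : Submodule R (M ⧸ p) // P (U.comap p.mkQ)} :=
  Nat.card_congr ((p.comapMkQRelIso.toEquiv.subtypeEquiv fun _ => Iff.rfl).trans
    (Equiv.subtypeSubtypeEquivSubtypeInter (· ∈ Set.Ici p) P)).symm

end Lattice

section Subspaces

variable {K V : Type*} [Field K] [AddCommGroup V] [Module K V] [FiniteDimensional K V]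

def linearIndependentSpanEquiv (d : ℕ) (W : {W : Submodule K V // finrank K W = d}) :
    {s : {s : Fin d → V // LinearIndependent K s} // span K (Set.range s.1) = W.1} ≃
      {t : Fin d → W.1 // LinearIndependent K t} where
  toFun s := ⟨fun i => ⟨s.1.1 i, s.2.le (subset_span (Set.mem_range_self i))⟩,
    LinearIndependent.of_comp W.1.subtype s.1.2⟩
  invFun t := ⟨⟨W.1.subtype ∘ t.1, t.2.map' _ W.1.ker_subtype⟩, by
    refine eq_of_le_of_finrank_le (span_le.2 ?_) ?_
    · rintro _ ⟨i, rfl⟩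
      exact (t.1 i).2
    · rw [finrank_span_eq_card (t.2.map' _ W.1.ker_subtype), Fintype.card_fin, W.2]⟩
  left_inv _ := rfl
  right_inv _ := rfl

theorem finrank_comap_mkQ (p : Submodule K V) (U : Submodule K (V ⧸ p)) :
    finrank K (U.comap p.mkQ) = finrank K U + finrank K p := by
  have h := LinearMap.finrank_range_add_finrank_ker (p.mkQ.domRestrict (U.comap p.mkQ))
  rw [LinearMap.range_domRestrict, map_comap_eq_of_surjective p.mkQ_surjective,
    LinearMap.ker_domRestrict, ker_mkQ,
    (comapSubtypeEquivOfLe (le_comap_mkQ p U)).finrank_eq] at h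
  exact h.symm

variable [Fintype K]

attribute [local instance] Fintype.ofFinite

theorem card_linearIndependent_eq_natCard_subspaces_mul (d : ℕ) :
    Nat.card {s : Fin d → V // LinearIndependent K s} =
      Nat.card {W : Submodule K V // finrank K W = d} *
        ∏ i : Fin d, (Fintype.card K ^ d - Fintype.card K ^ i.val) := by
  have : Finite V := Module.finite_of_finite K
  let spanSubmodule (s : {s : Fin d → V // LinearIndependent K s}) :
      {W : Submodule K V // finrank K W = d} :=
    ⟨span K (Set.range s.1), by rw [finrank_span_eq_card s.2, Fintype.card_fin]⟩
  calc Nat.card {s : Fin d → V // LinearIndependent K s}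
      = ∑ W, Nat.card {s // spanSubmodule s = W} := by
        rw [← Nat.card_sigma, Nat.card_congr (Equiv.sigmaFiberEquiv spanSubmodule)]
    _ = ∑ W : {W : Submodule K V // finrank K W = d},
          Nat.card {t : Fin d → W.1 // LinearIndependent K t} := by
        refine sum_congr rfl fun W _ => Nat.card_congr ?_
        exact (Equiv.subtypeEquivRight fun s => Subtype.ext_iff).trans
          (linearIndependentSpanEquiv d W)
    _ = _ := by
        rw [sum_congr rfl fun W _ => by rw [card_linearIndependent W.2.ge, W.2], sum_const,
          smul_eq_mul, card_univ, Nat.card_eq_fintype_card]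

theorem natCard_subspaces_eq_qBinom {d : ℕ} (hd : d ≤ finrank K V) :
    (Nat.card {W : Submodule K V // finrank K W = d} : ℚ) =
      qBinom (Fintype.card K) (finrank K V) d := by
  have : Finite V := Module.finite_of_finite K
  set q := Fintype.card K
  have hq : (1 : ℚ) < q := by exact_mod_cast Fintype.one_lt_card
  have cast_prod (k : ℕ) (hk : d ≤ k) :
      ((∏ i : Fin d, (q ^ k - q ^ i.val) : ℕ) : ℚ) = ∏ i ∈ range d, ((q : ℚ) ^ k - q ^ i) := by
    rw [Nat.cast_prod, Fin.prod_univ_eq_prod_range (fun i => ((q ^ k - q ^ i : ℕ) : ℚ))]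
    refine prod_congr rfl fun i hi => ?_
    rw [Nat.cast_sub (Nat.pow_le_pow_right Fintype.card_pos ((mem_range.1 hi).le.trans hk))]
    push_cast
    rfl
  have hcount := congrArg (Nat.cast : ℕ → ℚ)
    (card_linearIndependent_eq_natCard_subspaces_mul (K := K) (V := V) d)
  rw [card_linearIndependent hd, Nat.cast_mul, cast_prod _ hd, cast_prod _ le_rfl] at hcount
  have hne : ∏ i ∈ range d, ((q : ℚ) ^ d - q ^ i) ≠ 0 :=
    prod_ne_zero_iff.2 fun i hi => sub_ne_zero.2 (pow_lt_pow_right₀ hq (mem_range.1 hi)).ne'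
  obtain ⟨m, hm⟩ := Nat.exists_eq_add_of_le' hd
  rw [hm] at hcount ⊢
  exact mul_right_cancel₀ hne (hcount.symm.trans (qBinom_add_mul_prod_pow_sub_pow hq m d).symm)

theorem natCard_subspaces_between_eq_qBinom {A B : Submodule K V} (hAB : A ≤ B) {r : ℕ}
    (hA : finrank K A ≤ r) (hB : r ≤ finrank K B) :
    (Nat.card {W : {W : Submodule K V // finrank K W = r} // A ≤ W.1 ∧ W.1 ≤ B} : ℚ) =
      qBinom (Fintype.card K) (finrank K B - finrank K A) (r - finrank K A) := by
  set A' := A.comap B.subtype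
  have hA' : finrank K A' = finrank K A := (comapSubtypeEquivOfLe hAB).finrank_eq
  have hmapA' : A'.map B.subtype = A := by rw [map_comap_subtype, inf_eq_right.2 hAB]
  have hquot : finrank K (B ⧸ A') = finrank K B - finrank K A := by
    rw [← hA', ← finrank_quotient_add_finrank A', Nat.add_sub_cancel]
  have hcard : Nat.card {W : {W : Submodule K V // finrank K W = r} // A ≤ W.1 ∧ W.1 ≤ B} =
      Nat.card {U : Submodule K (B ⧸ A') // finrank K U = r - finrank K A} :=
    calc _ = Nat.card {W : Submodule K V // W ≤ B ∧ A ≤ W ∧ finrank K W = r} :=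
          Nat.card_congr ((Equiv.subtypeSubtypeEquivSubtypeInter
            (fun W : Submodule K V => finrank K W = r) fun W => A ≤ W ∧ W ≤ B).trans
            (Equiv.subtypeEquivRight fun _ => by tauto))
      _ = Nat.card {W : Submodule K B // A' ≤ W ∧ finrank K W = r} := by
          rw [natCard_submodules_below]
          refine Nat.card_congr (Equiv.subtypeEquivRight fun W => ?_)
          rw [finrank_map_subtype_eq, ← hmapA', map_le_map_iff_of_injective B.injective_subtype]
      _ = Nat.card {U : Submodule K (B ⧸ A') // finrank K (U.comap A'.mkQ) = r} :=
          natCard_submodules_above A' _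
      _ = Nat.card {U : Submodule K (B ⧸ A') // finrank K U = r - finrank K A} :=
          Nat.card_congr (Equiv.subtypeEquivRight fun U => by
            rw [finrank_comap_mkQ, hA']
            omega)
  rw [hcard, natCard_subspaces_eq_qBinom (by omega), hquot]

end Subspaces

section Radon

variable {K Ω : Type*} [Field K] [AddCommGroup Ω] [Module K Ω]

attribute [local instance] Fintype.ofFinite

theorem radon_radon_eq_finsum [Finite (Submodule K Ω)] {r₁ r₂ r₃ : ℕ}
    (φ : {W : Submodule K Ω // finrank K W = r₁} → ℂ)
    (x₃ : {W : Submodule K Ω // finrank K W = r₃}) :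
    radon K Ω r₂ r₃ (radon K Ω r₁ r₂ φ) x₃ =
      ∑ᶠ x₁, (Nat.card {x₂ : {W : Submodule K Ω // finrank K W = r₂} //
        x₁.1 ≤ x₂.1 ∧ x₂.1 ≤ x₃.1} : ℂ) * φ x₁ := by
  simp only [radon, finsum_eq_sum_of_fintype]
  calc _ = ∑ x₂ : {W : Submodule K Ω // finrank K W = r₂},
          ∑ x₁ : {W : Submodule K Ω // finrank K W = r₁},
            if x₁.1 ≤ x₂.1 ∧ x₂.1 ≤ x₃.1 then φ x₁ else 0 :=
        sum_congr rfl fun x₂ _ => by by_cases h : x₂.1 ≤ x₃.1 <;> simp [h]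
    _ = _ := by
        rw [sum_comm]
        refine sum_congr rfl fun x₁ _ => ?_
        rw [← sum_filter, sum_const, nsmul_eq_mul, Nat.card_eq_fintype_card, Fintype.card_subtype]

end Radon

theorem radon_comp_general (q r₁ r₂ r₃ : ℕ) (K : Type*) [Field K] [Fintype K]
    (hq : Fintype.card K = q)
    (Ω : Type*) [AddCommGroup Ω] [Module K Ω] [FiniteDimensional K Ω]
    (h12 : r₁ ≤ r₂) (h23 : r₂ ≤ r₃)
    (φ : {W : Submodule K Ω // Module.finrank K W = r₁} → ℂ)
    (x₃ : {W : Submodule K Ω // Module.finrank K W = r₃}) :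
    radon K Ω r₂ r₃ (radon K Ω r₁ r₂ φ) x₃ =
      (qBinom (q : ℚ) (r₃ - r₁) (r₂ - r₁) : ℂ) * radon K Ω r₁ r₃ φ x₃ := by
  have : Finite Ω := Module.finite_of_finite K
  have hcount (x₁ : {W : Submodule K Ω // finrank K W = r₁}) :
      (Nat.card {x₂ : {W : Submodule K Ω // finrank K W = r₂} // x₁.1 ≤ x₂.1 ∧ x₂.1 ≤ x₃.1} : ℂ) =
        if x₁.1 ≤ x₃.1 then (qBinom q (r₃ - r₁) (r₂ - r₁) : ℂ) else 0 := by
    split_ifs with h13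
    · have h := natCard_subspaces_between_eq_qBinom h13 (x₁.2.trans_le h12)
        (h23.trans_eq x₃.2.symm)
      rw [x₁.2, x₃.2, hq] at h
      exact_mod_cast h
    · rw [Nat.cast_eq_zero, Nat.card_eq_zero]
      exact Or.inl ⟨fun x₂ => h13 (x₂.2.1.trans x₂.2.2)⟩
  rw [radon_radon_eq_finsum, radon, mul_finsum]
  exact finsum_congr fun x₁ => by rw [hcount, ite_mul, zero_mul, mul_ite, mul_zero]

/-- Composition of inclusion Radon transforms: for `r₁ ≤ r₂ ≤ r₃ ≤ n`,
`R^{r₂,r₃}_⊂ ∘ R^{r₁,r₂}_⊂ = [r₃ - r₁ choose r₂ - r₁]_q · R^{r₁,r₃}_⊂`. -/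
theorem radon_comp (q n r₁ r₂ r₃ : ℕ) (K : Type*) [Field K] [Fintype K]
    (hq : Fintype.card K = q)
    (Ω : Type*) [AddCommGroup Ω] [Module K Ω] [FiniteDimensional K Ω]
    (hn : Module.finrank K Ω = n)
    (h12 : r₁ ≤ r₂) (h23 : r₂ ≤ r₃) (h3n : r₃ ≤ n)
    (φ : {W : Submodule K Ω // Module.finrank K W = r₁} → ℂ)
    (x₃ : {W : Submodule K Ω // Module.finrank K W = r₃}) :
    radon K Ω r₂ r₃ (radon K Ω r₁ r₂ φ) x₃ =
      (qBinom (q : ℚ) (r₃ - r₁) (r₂ - r₁) : ℂ) * radon K Ω r₁ r₃ φ x₃ :=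
  radon_comp_general q r₁ r₂ r₃ K hq Ω h12 h23 φ x₃
end
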